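/- arXiv:2002.11782 — 6 statements merged into one kernel-verified Lean document; each statement's English description precedes it below -/
import Mathlib

section
/- Let (g_k) be a sequence of real d×d matrices converging to g, such that for every k the number ℓ_1(g_k) (the maximum modulus of the eigenvalues of g_k) is itself a real eigenvalue of g_k. Then ℓ_1(g) is a real eigenvalue of g; that is, a limit of positively semiproximal matrices is positively semiproximal. -/
open Matrix Polynomial

/-- The multiset of complex eigenvalues (with algebraic multiplicity) of a real matrix. -/
noncomputable def specC {n : Type*} [Fintype n] [DecidableEq n]
    (A : Matrix n n ℝ) : Multiset ℂ :=
  ((A.map (algebraMap ℝ ℂ)).charpoly).roots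

/-- The moduli of the eigenvalues of `A`, sorted in decreasing order. -/
noncomputable def ellList {n : Type*} [Fintype n] [DecidableEq n]
    (A : Matrix n n ℝ) : List ℝ :=
  ((specC A).map (fun z : ℂ => ‖z‖)).sort (· ≥ ·)

/-- `ell A i` is `ℓ_i(A)`, the `i`-th largest modulus of an eigenvalue of `A` (1-based). -/
noncomputable def ell {n : Type*} [Fintype n] [DecidableEq n]
    (A : Matrix n n ℝ) (i : ℕ) : ℝ :=
  (ellList A).getD (i - 1) 0

/-- The singular values of `g`, i.e. the square roots of the eigenvalues of `g * gᴴ`,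
sorted in decreasing order. -/
noncomputable def svalList {n : Type*} [Fintype n] [DecidableEq n]
    (g : Matrix n n ℝ) : List ℝ :=
  (Finset.univ.val.map fun i =>
    Real.sqrt ((Matrix.isHermitian_mul_conjTranspose_self g).eigenvalues i)).sort (· ≥ ·)

/-- `sval g i` is `σ_i(g)`, the `i`-th largest singular value of `g` (1-based). -/
noncomputable def sval {n : Type*} [Fintype n] [DecidableEq n]
    (g : Matrix n n ℝ) (i : ℕ) : ℝ :=
  (svalList g).getD (i - 1) 0

/-- The multiset of eigenvalues of the `i`-th exterior power `∧^i A`: products of the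
eigenvalues of `A` over `i`-element sub-multisets. -/
noncomputable def wedgeSpec {n : Type*} [Fintype n] [DecidableEq n]
    (i : ℕ) (A : Matrix n n ℝ) : Multiset ℂ :=
  ((specC A).powersetCard i).map Multiset.prod

/-!
Along a subsequence, `ℓ_1(g_k)` converges to some `L`; by continuity of `(M, t) ↦ χ_M(t)` the limit
`L` is a real root of `χ_A`, so `L ≤ ℓ_1(A)`. Conversely `ℓ_1` is lower semicontinuous: if `z` is an
eigenvalue of `A` with `|z| = ℓ_1(A)`, then `|χ_M(z)| = ∏_w |z - w| ≥ (ℓ_1(A) - ℓ_1(M))^d` whenever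
`ℓ_1(M) < ℓ_1(A)`, while `χ_M(z) → χ_A(z) = 0` as `M → A`. Hence `L = ℓ_1(A)`.
-/

open Filter Topology

section

variable {n : Type*} [Fintype n] [DecidableEq n]

theorem Polynomial.Splits.pow_natDegree_le_norm_eval {K : Type*} [NormedField K] {p : K[X]}
    (hs : p.Splits) (hp : p.Monic) {z : K} {δ : ℝ} (hδ : 0 ≤ δ)
    (hroots : ∀ w ∈ p.roots, δ ≤ ‖z - w‖) : δ ^ p.natDegree ≤ ‖p.eval z‖ := by
  rw [hs.eval_eq_prod_roots_of_monic hp, hs.natDegree_eq_card_roots,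
    ← Multiset.prod_replicate, ← Multiset.map_const']
  rw [show ‖(p.roots.map (z - ·)).prod‖ = (p.roots.map (‖z - ·‖)).prod by
    simpa [Multiset.map_map] using map_multiset_prod (normHom : K →*₀ ℝ) (p.roots.map (z - ·))]
  exact Multiset.prod_map_le_prod_map₀ _ _ (fun _ _ => hδ) hroots

theorem Matrix.continuous_eval_charpoly {R : Type*} [CommRing R] [TopologicalSpace R]
    [IsTopologicalRing R] : Continuous fun p : Matrix n n R × R => p.1.charpoly.eval p.2 := by
  simp only [eval_charpoly, scalar_apply]
  fun_prop

theorem Matrix.isClosed_setOf_isRoot_charpoly {R : Type*} [CommRing R] [TopologicalSpace R]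
    [IsTopologicalRing R] [T2Space R] :
    IsClosed {p : Matrix n n R × R | p.1.charpoly.IsRoot p.2} :=
  isClosed_eq continuous_eval_charpoly continuous_const

theorem mem_specC_iff_isRoot (A : Matrix n n ℝ) (z : ℂ) :
    z ∈ specC A ↔ (A.map (algebraMap ℝ ℂ)).charpoly.IsRoot z :=
  mem_roots (charpoly_monic _).ne_zero

theorem ofReal_mem_specC_iff (A : Matrix n n ℝ) (r : ℝ) :
    (r : ℂ) ∈ specC A ↔ A.charpoly.IsRoot r := by
  rw [mem_specC_iff_isRoot, charpoly_map, IsRoot, IsRoot, eval_map_algebraMap,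
    show (r : ℂ) = algebraMap ℝ ℂ r from rfl, aeval_algebraMap_apply]
  simp

theorem card_specC (A : Matrix n n ℝ) : Multiset.card (specC A) = Fintype.card n := by
  rw [specC, IsAlgClosed.card_roots_eq_natDegree, charpoly_natDegree_eq_dim]

theorem mem_ellList {A : Matrix n n ℝ} {x : ℝ} : x ∈ ellList A ↔ ∃ z ∈ specC A, ‖z‖ = x := by
  simp [ellList]

theorem norm_le_ell_one {A : Matrix n n ℝ} {z : ℂ} (hz : z ∈ specC A) : ‖z‖ ≤ ell A 1 := by
  have hmem : ‖z‖ ∈ ellList A := mem_ellList.2 ⟨z, hz, rfl⟩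
  obtain ⟨a, t, hat⟩ := List.exists_cons_of_ne_nil (List.ne_nil_of_mem hmem)
  have hsorted : (a :: t).Pairwise (· ≥ ·) := hat ▸ Multiset.pairwise_sort _ _
  rw [hat] at hmem
  simp only [ell, hat, Nat.sub_self, List.getD_cons_zero]
  rcases List.mem_cons.1 hmem with h | h
  · exact h.le
  · exact List.rel_of_pairwise_cons hsorted h

theorem exists_mem_specC_norm_eq_ell_one [Nonempty n] (A : Matrix n n ℝ) :
    ∃ z ∈ specC A, ‖z‖ = ell A 1 := by
  have hlen : (ellList A).length ≠ 0 := by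
    simp [ellList, card_specC]
  obtain ⟨a, t, hat⟩ := List.exists_cons_of_length_pos (Nat.pos_of_ne_zero hlen)
  obtain ⟨z, hz, hza⟩ := mem_ellList.1 (hat ▸ List.mem_cons_self : a ∈ ellList A)
  exact ⟨z, hz, by simp [ell, hat, hza]⟩

theorem ell_one_nonneg [Nonempty n] (A : Matrix n n ℝ) : 0 ≤ ell A 1 := by
  obtain ⟨z, -, hz⟩ := exists_mem_specC_norm_eq_ell_one A
  exact hz ▸ norm_nonneg z

theorem lowerSemicontinuous_ell_one [Nonempty n] :
    LowerSemicontinuous fun M : Matrix n n ℝ => ell M 1 := by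
  intro A y hy
  obtain ⟨z, hzA, hz⟩ := exists_mem_specC_norm_eq_ell_one A
  set δ := ell A 1 - y
  have hδ : 0 < δ := sub_pos.2 hy
  have hcont : Continuous fun M : Matrix n n ℝ => (M.map (algebraMap ℝ ℂ)).charpoly.eval z :=
    continuous_eval_charpoly.comp ((continuous_id.matrix_map (by fun_prop)).prodMk continuous_const)
  have hzero : (A.map (algebraMap ℝ ℂ)).charpoly.eval z = 0 := (mem_specC_iff_isRoot A z).1 hzA
  have hsmall : ∀ᶠ M in 𝓝 A, ‖(M.map (algebraMap ℝ ℂ)).charpoly.eval z‖ < δ ^ Fintype.card n := by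
    have := (hcont.tendsto A).norm
    rw [hzero, norm_zero] at this
    exact this.eventually_lt_const (pow_pos hδ _)
  filter_upwards [hsmall] with M hM
  by_contra! hMy
  refine hM.not_ge ?_
  have hfar : ∀ w ∈ specC M, δ ≤ ‖z - w‖ := fun w hw =>
    calc δ ≤ ‖z‖ - ‖w‖ := by linarith [norm_le_ell_one hw]
      _ ≤ ‖z - w‖ := norm_sub_norm_le z w
  simpa [charpoly_natDegree_eq_dim] using
    (IsAlgClosed.splits _).pow_natDegree_le_norm_eval (charpoly_monic _) hδ.le hfar

end

section

attribute [local instance] Matrix.linftyOpNormedRing Matrix.linftyOpNormedAlgebra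

variable {n : Type*} [Fintype n] [DecidableEq n] [Nonempty n]

theorem ell_one_le_norm_map_mul_norm_one (A : Matrix n n ℝ) :
    ell A 1 ≤ ‖A.map (algebraMap ℝ ℂ)‖ * ‖(1 : Matrix n n ℂ)‖ := by
  obtain ⟨z, hz, hzA⟩ := exists_mem_specC_norm_eq_ell_one A
  rw [← hzA]
  have hspec : z ∈ spectrum ℂ (A.map (algebraMap ℝ ℂ)) :=
    mem_spectrum_iff_isRoot_charpoly.2 ((mem_specC_iff_isRoot A z).1 hz)
  simpa using spectrum.subset_closedBall_norm_mul _ hspec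

theorem isBounded_range_ell_one {g : ℕ → Matrix n n ℝ} {A : Matrix n n ℝ}
    (hlim : Tendsto g atTop (𝓝 A)) : Bornology.IsBounded (Set.range fun k => ell (g k) 1) := by
  have hcont : Continuous fun M : Matrix n n ℝ => ‖M.map (algebraMap ℝ ℂ)‖ :=
    (continuous_id.matrix_map (by fun_prop)).norm
  obtain ⟨C, hC⟩ := ((hcont.tendsto A).comp hlim).bddAbove_range
  refine (Metric.isBounded_Icc 0 (C * ‖(1 : Matrix n n ℂ)‖)).subset ?_
  rintro _ ⟨k, rfl⟩
  exact ⟨ell_one_nonneg _, (ell_one_le_norm_map_mul_norm_one _).trans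
    (mul_le_mul_of_nonneg_right (hC ⟨k, rfl⟩) (norm_nonneg _))⟩

end

/-- a limit of positively semiproximal real matrices is positively semiproximal:
if `g_k → g` and for each `k` the maximal modulus `ℓ_1(g_k)` is a (real) eigenvalue of `g_k`,
then `ℓ_1(g)` is a (real) eigenvalue of `g`. -/
theorem stmt_3 {d : ℕ} (g : ℕ → Matrix (Fin d) (Fin d) ℝ) (A : Matrix (Fin d) (Fin d) ℝ)
    (hlim : Filter.Tendsto g Filter.atTop (nhds A))
    (hpsp : ∀ k, ((g k).charpoly).IsRoot (ell (g k) 1)) :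
    (A.charpoly).IsRoot (ell A 1) := by
  cases isEmpty_or_nonempty (Fin d)
  · simpa [charpoly_isEmpty] using hpsp 0
  obtain ⟨L, -, φ, hφ, hL⟩ :=
    tendsto_subseq_of_bounded (isBounded_range_ell_one hlim) (Set.mem_range_self ·)
  have hgφ : Tendsto (g ∘ φ) atTop (𝓝 A) := hlim.comp hφ.tendsto_atTop
  have hroot : A.charpoly.IsRoot L := isClosed_setOf_isRoot_charpoly.mem_of_tendsto
    (hgφ.prodMk_nhds hL) (Eventually.of_forall fun k => hpsp (φ k))
  have hle : L ≤ ell A 1 := calc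
    L ≤ ‖(L : ℂ)‖ := by simpa using le_abs_self L
    _ ≤ ell A 1 := norm_le_ell_one ((ofReal_mem_specC_iff A L).2 hroot)
  have hge : ell A 1 ≤ L := le_of_forall_lt_imp_le_of_dense fun y hy =>
    ge_of_tendsto hL ((hgφ.eventually (lowerSemicontinuous_ell_one A y hy)).mono fun _ => le_of_lt)
  rwa [← le_antisymm hle hge]
end

section
/- Let g ∈ SL(2,ℝ) be a matrix with a real eigenvalue λ satisfying λ < -1, so g = h · diag(λ, 1/λ) · h⁻¹ for some h ∈ GL(2,ℝ). Let a ∈ SL(2,ℝ) be such that the (1,1)-entry c of h⁻¹ a h is nonzero. Then the top eigenvalue ratio converges: λ_1(gⁿ a)/λⁿ → c as n → ∞, where for all sufficiently large n the matrix gⁿ a has a unique eigenvalue λ_1(gⁿ a) of maximal modulus and it is real. -/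
open Matrix Polynomial

/-- `L` is the unique eigenvalue of maximal modulus of `A`, and it is real. -/
def IsTopEig {n : Type*} [Fintype n] [DecidableEq n] (A : Matrix n n ℝ) (L : ℝ) : Prop :=
  (L : ℂ) ∈ specC A ∧ ∀ z ∈ specC A, z ≠ (L : ℂ) → ‖z‖ < |L|


lemma my_charpoly_fin_two (M : Matrix (Fin 2) (Fin 2) ℝ) :
    M.charpoly = X ^ 2 - C M.trace * X + C M.det := by
  rw [Matrix.charpoly, Matrix.det_fin_two, Matrix.charmatrix_apply_eq,
    Matrix.charmatrix_apply_eq, Matrix.charmatrix_apply_ne _ _ _ (by decide),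
    Matrix.charmatrix_apply_ne _ _ _ (by decide), Matrix.trace_fin_two, Matrix.det_fin_two]
  simp only [map_add, map_sub, _root_.map_mul]
  ring

noncomputable def topRoot (T : ℝ) : ℝ := T * (1 + Real.sqrt (1 - 4 / T ^ 2)) / 2

lemma topRoot_spec {T : ℝ} (hT : 2 < |T|) :
    1 < |topRoot T| ∧ topRoot T + (topRoot T)⁻¹ = T := by
  have hT0 : T ≠ 0 := by intro h; rw [h] at hT; simp at hT; linarith
  have hT4 : 4 < T ^ 2 := by nlinarith [sq_abs T, abs_nonneg T]
  have hnn : 0 ≤ 1 - 4 / T ^ 2 := by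
    rw [sub_nonneg, div_le_one (by positivity)]; linarith
  set s := Real.sqrt (1 - 4 / T ^ 2) with hs
  have hs0 : 0 ≤ s := Real.sqrt_nonneg _
  have hs2 : s ^ 2 = 1 - 4 / T ^ 2 := Real.sq_sqrt hnn
  have hs2' : T ^ 2 * s ^ 2 = T ^ 2 - 4 := by field_simp [hT0] at hs2 ⊢; linarith [hs2]
  have habs : |topRoot T| = |T| * (1 + s) / 2 := by
    rw [topRoot, abs_div, abs_mul, abs_of_pos (by linarith : (0:ℝ) < 1 + s)]
    norm_num
  have h1 : 1 < |topRoot T| := by rw [habs]; nlinarith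
  have hL0 : topRoot T ≠ 0 := by
    intro h; rw [h] at h1; simp at h1; linarith
  refine ⟨h1, ?_⟩
  have hroot : topRoot T ^ 2 - T * topRoot T + 1 = 0 := by
    rw [topRoot]; linear_combination hs2' / 4
  have hinv : (topRoot T)⁻¹ = T - topRoot T := by
    apply inv_eq_of_mul_eq_one_right
    linear_combination -hroot
  rw [hinv]; ring

lemma roots_quad (T Lr : ℝ) (hL0 : Lr ≠ 0) (hsum : Lr + Lr⁻¹ = T) :
    ((X ^ 2 - C T * X + C 1 : ℝ[X]).map (algebraMap ℝ ℂ)).roots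
      = {(Lr : ℂ), ((Lr⁻¹ : ℝ) : ℂ)} := by
  have h1 : ((Lr : ℂ)) * ((Lr⁻¹ : ℝ) : ℂ) = 1 := by
    rw [← Complex.ofReal_mul, mul_inv_cancel₀ hL0, Complex.ofReal_one]
  have h2 : ((Lr : ℂ)) + ((Lr⁻¹ : ℝ) : ℂ) = (T : ℂ) := by exact_mod_cast congrArg (Complex.ofReal) hsum
  have hmap : (X ^ 2 - C T * X + C 1 : ℝ[X]).map (algebraMap ℝ ℂ)
      = (X - C (Lr : ℂ)) * (X - C ((Lr⁻¹ : ℝ) : ℂ)) := by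
    simp only [Polynomial.map_add, Polynomial.map_sub, Polynomial.map_mul,
      Polynomial.map_pow, Polynomial.map_X, Polynomial.map_C]
    have e1 : (C ((T:ℂ)) : ℂ[X]) = C ((Lr : ℂ)) + C (((Lr⁻¹ : ℝ) : ℂ)) := by
      rw [← map_add, h2]
    have e2 : (C 1 : ℂ[X]) = C ((Lr : ℂ)) * C (((Lr⁻¹ : ℝ) : ℂ)) := by
      rw [← _root_.map_mul, h1]
    have hT : (algebraMap ℝ ℂ) T = ((T : ℂ)) := rfl
    have h1' : (algebraMap ℝ ℂ) 1 = (1 : ℂ) := map_one _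
    rw [hT, h1', e1, e2]; ring
  rw [hmap, Polynomial.roots_mul (mul_ne_zero (Polynomial.X_sub_C_ne_zero _) (Polynomial.X_sub_C_ne_zero _)),
    Polynomial.roots_X_sub_C, Polynomial.roots_X_sub_C]
  rfl

/-- if `g = h·diag(λ,1/λ)·h⁻¹ ∈ SL(2,ℝ)` with `λ < -1`, and `a ∈ SL(2,ℝ)` with
`c = (h⁻¹ a h)₁₁ ≠ 0`, then for large `n` the matrix `gⁿ a` has a unique, real eigenvalue
`λ_1(gⁿ a)` of maximal modulus, and `λ_1(gⁿ a)/λⁿ → c`. -/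
theorem stmt_4 (g a h : Matrix (Fin 2) (Fin 2) ℝ) (lam c : ℝ)
    (hg : g.det = 1) (ha : a.det = 1) (hh : IsUnit h)
    (hlam : lam < -1)
    (hconj : g = h * Matrix.diagonal ![lam, lam⁻¹] * h⁻¹)
    (hc : c = (h⁻¹ * a * h) 0 0) (hc0 : c ≠ 0) :
    ∃ (N : ℕ) (L : ℕ → ℝ), (∀ n ≥ N, IsTopEig (g ^ n * a) (L n)) ∧
      Filter.Tendsto (fun n => L n / lam ^ n) Filter.atTop (nhds c) := by
  have hlam0 : lam ≠ 0 := by intro h0; rw [h0] at hlam; linarith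
  have hlam1 : 1 < |lam| := by rw [abs_of_neg (by linarith)]; linarith
  set D : Matrix (Fin 2) (Fin 2) ℝ := Matrix.diagonal ![lam, lam⁻¹] with hD
  set m : Matrix (Fin 2) (Fin 2) ℝ := h⁻¹ * a * h with hm
  set d : ℝ := m 1 1 with hd
  have hhd : IsUnit h.det := (Matrix.isUnit_iff_isUnit_det h).mp hh
  have hinv : h⁻¹ * h = 1 := Matrix.nonsing_inv_mul h hhd
  have hinv' : h * h⁻¹ = 1 := Matrix.mul_nonsing_inv h hhd
  have hgn : ∀ n : ℕ, g ^ n = h * D ^ n * h⁻¹ := by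
    intro n
    induction n with
    | zero => simp [hinv']
    | succ n ih =>
        rw [pow_succ, ih, hconj, pow_succ]
        calc h * D ^ n * h⁻¹ * (h * D * h⁻¹)
            = h * D ^ n * (h⁻¹ * h) * D * h⁻¹ := by
              simp only [Matrix.mul_assoc]
          _ = h * (D ^ n * D) * h⁻¹ := by rw [hinv]; simp only [Matrix.mul_assoc, Matrix.mul_one, Matrix.one_mul]
  set T : ℕ → ℝ := fun n => lam ^ n * c + (lam⁻¹) ^ n * d with hT
  have htr : ∀ n : ℕ, (g ^ n * a).trace = T n := by
    intro n
    rw [hgn n]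
    have h1 : h * D ^ n * h⁻¹ * a = h * (D ^ n * (h⁻¹ * a)) := by
      simp only [Matrix.mul_assoc]
    rw [h1, Matrix.trace_mul_comm, ← Matrix.mul_assoc]
    have h2 : D ^ n = Matrix.diagonal ![lam ^ n, (lam⁻¹) ^ n] := by
      have hv : (![lam, lam⁻¹] : Fin 2 → ℝ) ^ n = ![lam ^ n, lam⁻¹ ^ n] := by
        funext i; fin_cases i <;> simp [Pi.pow_apply]
      rw [hD, Matrix.diagonal_pow, hv]
    have h3 : D ^ n * h⁻¹ * a * h = D ^ n * m := by
      rw [hm]; simp only [Matrix.mul_assoc]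
    rw [h3, h2, Matrix.trace_fin_two]
    simp only [Matrix.diagonal_mul, Matrix.cons_val_zero, Matrix.cons_val_one, Matrix.head_cons, hT]
    rw [hc, hd]
  have hdet : ∀ n : ℕ, (g ^ n * a).det = 1 := by
    intro n; rw [Matrix.det_mul, Matrix.det_pow, hg, ha]; simp
  have hchar : ∀ n : ℕ, (g ^ n * a).charpoly = X ^ 2 - C (T n) * X + C 1 := by
    intro n; rw [my_charpoly_fin_two, htr n, hdet n]
  have hspec : ∀ n : ℕ, 2 < |T n| → specC (g ^ n * a)
      = {((topRoot (T n) : ℝ) : ℂ), (((topRoot (T n))⁻¹ : ℝ) : ℂ)} := by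
    intro n hn
    obtain ⟨h1, h2⟩ := topRoot_spec hn
    have hL0 : topRoot (T n) ≠ 0 := by intro h0; rw [h0] at h1; norm_num at h1
    rw [specC, Matrix.charpoly_map, hchar n, roots_quad (T n) _ hL0 h2]
  set q : ℕ → ℝ := fun n => c + d * (lam⁻¹ * lam⁻¹) ^ n with hq
  have hTq : ∀ n, T n = lam ^ n * q n := by
    intro n
    simp only [hT, hq]
    have h1 : lam ^ n * (lam⁻¹) ^ n = 1 := by
      rw [← mul_pow, mul_inv_cancel₀ hlam0, one_pow]
    linear_combination (-(d * (lam⁻¹) ^ n)) * h1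
  have hq' : Filter.Tendsto q Filter.atTop (nhds c) := by
    have hinv1 : |lam⁻¹| < 1 := by
      rw [abs_inv]
      rw [inv_lt_one_iff₀]
      right; exact hlam1
    have hr : |lam⁻¹ * lam⁻¹| < 1 := by
      rw [abs_mul]; nlinarith [abs_nonneg lam⁻¹]
    have h2 := (tendsto_pow_atTop_nhds_zero_of_abs_lt_one hr).const_mul d
    simpa [hq] using (tendsto_const_nhds.add h2)
  have hTlam : Filter.Tendsto (fun n => T n / lam ^ n) Filter.atTop (nhds c) := by
    apply hq'.congr
    intro n
    rw [hTq n, mul_div_cancel_left₀ _ (pow_ne_zero n hlam0)]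
  have habsT : Filter.Tendsto (fun n => |T n|) Filter.atTop Filter.atTop := by
    have h1 : Filter.Tendsto (fun n : ℕ => |lam| ^ n) Filter.atTop Filter.atTop :=
      tendsto_pow_atTop_atTop_of_one_lt hlam1
    have h2 : Filter.Tendsto (fun n => |q n|) Filter.atTop (nhds |c|) :=
      (continuous_abs.tendsto c).comp hq'
    have h3 := h1.atTop_mul_pos (abs_pos.mpr hc0) h2
    apply h3.congr
    intro n
    rw [← abs_pow, ← abs_mul, ← hTq n]
  have hev : ∀ᶠ n in Filter.atTop, 2 < |T n| := habsT.eventually_gt_atTop 2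
  obtain ⟨N, hN⟩ := Filter.eventually_atTop.mp hev
  refine ⟨N, fun n => topRoot (T n), fun n hn => ?_, ?_⟩
  · have hTn := hN n hn
    obtain ⟨h1, h2⟩ := topRoot_spec hTn
    have hsp := hspec n hTn
    constructor
    · rw [hsp]; exact Multiset.mem_cons_self _ _
    · intro z hz hne
      rw [hsp] at hz
      simp only [Multiset.insert_eq_cons, Multiset.mem_cons, Multiset.mem_singleton] at hz
      rcases hz with hz | hz
      · exact absurd hz hne
      · rw [hz, Complex.norm_real, Real.norm_eq_abs, abs_inv]
        have h3 : |topRoot (T n)|⁻¹ < 1 := by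
          rw [inv_lt_one_iff₀]; right; exact h1
        linarith
  · have hsq : Filter.Tendsto (fun n => Real.sqrt (1 - 4 / (T n) ^ 2))
        Filter.atTop (nhds 1) := by
      have hT2 : Filter.Tendsto (fun n => (T n) ^ 2) Filter.atTop Filter.atTop := by
        apply (habsT.atTop_mul_atTop₀ habsT).congr
        intro n; rw [← sq_abs (T n), sq]
      have h4 : Filter.Tendsto (fun n => 4 / (T n) ^ 2) Filter.atTop (nhds 0) := by
        have := (tendsto_inv_atTop_zero.comp hT2).const_mul (4:ℝ)
        simpa [div_eq_mul_inv] using this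
      have h5 : Filter.Tendsto (fun n => 1 - 4 / (T n) ^ 2) Filter.atTop (nhds 1) := by
        simpa using tendsto_const_nhds.sub h4
      have h6 := (Real.continuous_sqrt.tendsto 1).comp h5
      simpa [Function.comp_def] using h6
    have htail : Filter.Tendsto (fun n => (1 + Real.sqrt (1 - 4 / (T n) ^ 2)) / 2)
        Filter.atTop (nhds ((1 + 1) / 2)) :=
      (Filter.Tendsto.add (tendsto_const_nhds (x := (1:ℝ))) hsq).div_const 2
    have hmain := hTlam.mul htail
    have hmain' : Filter.Tendsto
        (fun n => (T n / lam ^ n) * ((1 + Real.sqrt (1 - 4 / (T n) ^ 2)) / 2))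
        Filter.atTop (nhds c) := by
      have hcc : c * ((1 + 1) / 2) = c := by ring
      rw [← hcc]
      exact hmain
    apply hmain'.congr
    intro n
    unfold topRoot; ring
end

section
/- Let λ > 0, μ > 1, x > 0 satisfy λ > x³ > λ/μ² > 1, and let g = diag(μ², 1, 1, μ⁻²) ⊗ diag(−λ/x, x², −1/(λx)) ∈ GL(12,ℝ). Then the fifth exterior power ∧⁵g has a unique eigenvalue of maximal modulus up to multiplicity, namely the negative real number −λ³μ⁴x, occurring with multiplicity 2. In particular ∧⁵g is not positively semiproximal. -/
set_option maxRecDepth 100000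

open Matrix Polynomial

lemma charpoly_diag {n : Type*} [Fintype n] [DecidableEq n] {R : Type*} [CommRing R]
    (d : n → R) : (Matrix.diagonal d).charpoly = ∏ i, (X - C (d i)) := by
  have h : charmatrix (Matrix.diagonal d) = Matrix.diagonal (fun i => X - C (d i)) := by
    ext i j
    by_cases h : i = j
    · subst h; simp [charmatrix_apply_eq]
    · simp [charmatrix_apply_ne _ _ _ h, Matrix.diagonal_apply_ne _ h]
  rw [Matrix.charpoly, h, Matrix.det_diagonal]

lemma specC_diag {n : Type*} [Fintype n] [DecidableEq n] (d : n → ℝ) :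
    specC (Matrix.diagonal d) = Finset.univ.val.map (fun i => (d i : ℂ)) := by
  rw [specC, Matrix.diagonal_map (by simp), charpoly_diag]
  have : (∏ i, (X - C ((algebraMap ℝ ℂ) (d i)))) =
      ((Finset.univ.val.map fun i => ((d i : ℂ))).map fun a => X - C a).prod := by
    rw [Multiset.map_map]; rfl
  rw [this, Polynomial.roots_multiset_prod_X_sub_C]

set_option maxHeartbeats 12000000 in
lemma master (L M X : ℝ) (hM : 0 < M) (hX : 0 < X) (hA : 3*X < L) (hB : L - 2*M < 3*X)
    (hC : 0 < L - 2*M)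
    (k0 k1 k2 k3 k4 k5 k6 k7 k8 : ℕ)
    (b0 : k0 ≤ 1) (b1 : k1 ≤ 1) (b2 : k2 ≤ 1) (b3 : k3 ≤ 2) (b4 : k4 ≤ 2) (b5 : k5 ≤ 2)
    (b6 : k6 ≤ 1) (b7 : k7 ≤ 1) (b8 : k8 ≤ 1)
    (hsum : k0+k1+k2+k3+k4+k5+k6+k7+k8 = 5)
    (hne : ¬(k0 = 1 ∧ k1 = 1 ∧ k3 = 2 ∧ k4 = 1)) :
    (k0:ℝ)*(L-X+2*M) + k1*(2*X+2*M) + k2*(-L-X+2*M) + k3*(L-X) + k4*(2*X) + k5*(-L-X)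
      + k6*(L-X-2*M) + k7*(2*X-2*M) + k8*(-L-X-2*M) < 3*L + X + 4*M := by
  interval_cases k0 <;> interval_cases k1 <;> interval_cases k2 <;> interval_cases k3 <;>
    interval_cases k4 <;> interval_cases k5 <;> interval_cases k6 <;>
    interval_cases k7 <;> interval_cases k8 <;> first | omega | (push_cast; linarith)

lemma sum9 {β : Type*} [AddCommMonoid β] (f : Fin 9 → β) :
    ∑ i, f i = f 0 + f 1 + f 2 + f 3 + f 4 + f 5 + f 6 + f 7 + f 8 := by
  rw [Fin.sum_univ_castSucc, Fin.sum_univ_eight]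
  rfl

/-- with `λ > 0`, `μ > 1`, `x > 0`, `λ > x³ > λ/μ² > 1` and
`g = diag(μ²,1,1,μ⁻²) ⊗ diag(−λ/x, x², −1/(λx))`, the fifth exterior power `∧⁵g` has the
negative real `−λ³μ⁴x` as its unique eigenvalue of maximal modulus, with multiplicity 2;
in particular `∧⁵g` is not positively semiproximal. -/
theorem stmt_7 (lam mu x : ℝ) (hlam : 0 < lam) (hmu : 1 < mu) (hx : 0 < x)
    (h1 : lam > x ^ 3) (h2 : x ^ 3 > lam / mu ^ 2) (h3 : lam / mu ^ 2 > 1) :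
    let g : Matrix (Fin 4 × Fin 3) (Fin 4 × Fin 3) ℝ :=
      Matrix.kroneckerMap (· * ·)
        (Matrix.diagonal ![mu ^ 2, 1, 1, mu⁻¹ ^ 2])
        (Matrix.diagonal ![-(lam / x), x ^ 2, -(1 / (lam * x))])
    Multiset.count ((-(lam ^ 3 * mu ^ 4 * x) : ℝ) : ℂ) (wedgeSpec 5 g) = 2 ∧
    (∀ z ∈ wedgeSpec 5 g, z ≠ ((-(lam ^ 3 * mu ^ 4 * x) : ℝ) : ℂ) →
      ‖z‖ < lam ^ 3 * mu ^ 4 * x) ∧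
    ((lam ^ 3 * mu ^ 4 * x : ℝ) : ℂ) ∉ wedgeSpec 5 g := by
  intro g
  have hmu0 : 0 < mu := lt_trans one_pos hmu
  have hx3 : (1:ℝ) < x ^ 3 := lt_trans h3 h2
  have hx1 : 1 < x := by
    by_contra hcon
    push_neg at hcon
    nlinarith [sq_nonneg x, mul_pos hx hx]
  have hmu2 : (1:ℝ) < mu ^ 2 := by nlinarith
  have hlam1 : 1 < lam := by
    rw [gt_iff_lt, lt_div_iff₀ (by positivity)] at h3
    nlinarith
  have hlx : 0 < lam * x := mul_pos hlam hx
  set ρ : Fin 9 → ℝ := ![mu^2 * -(lam/x), mu^2 * x^2, mu^2 * -(1/(lam*x)),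
      -(lam/x), x^2, -(1/(lam*x)),
      mu⁻¹^2 * -(lam/x), mu⁻¹^2 * x^2, mu⁻¹^2 * -(1/(lam*x))] with hρ
  set ι : Fin 9 → ℂ := fun k => ((ρ k : ℝ) : ℂ) with hι
  set T : Multiset (Fin 9) := (([0,1,2,3,4,5,3,4,5,6,7,8] : List (Fin 9)) : Multiset (Fin 9))
    with hT
  set T₀ : Multiset (Fin 9) := (([0,1,3,3,4] : List (Fin 9)) : Multiset (Fin 9)) with hT₀
  have e0 : ρ 0 = mu^2 * -(lam/x) := rfl
  have e1 : ρ 1 = mu^2 * x^2 := rfl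
  have e2 : ρ 2 = mu^2 * -(1/(lam*x)) := rfl
  have e3 : ρ 3 = -(lam/x) := rfl
  have e4 : ρ 4 = x^2 := rfl
  have e5 : ρ 5 = -(1/(lam*x)) := rfl
  have e6 : ρ 6 = mu⁻¹^2 * -(lam/x) := rfl
  have e7 : ρ 7 = mu⁻¹^2 * x^2 := rfl
  have e8 : ρ 8 = mu⁻¹^2 * -(1/(lam*x)) := rfl
  have hg : g = Matrix.diagonal (fun p : Fin 4 × Fin 3 =>
      (![mu ^ 2, 1, 1, mu⁻¹ ^ 2]) p.1 * (![-(lam / x), x ^ 2, -(1 / (lam * x))]) p.2) :=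
    Matrix.diagonal_kronecker_diagonal _ _
  have huniv : (Finset.univ.val : Multiset (Fin 4 × Fin 3)) =
      (([(0,0),(0,1),(0,2),(1,0),(1,1),(1,2),(2,0),(2,1),(2,2),(3,0),(3,1),(3,2)] :
        List (Fin 4 × Fin 3)) : Multiset (Fin 4 × Fin 3)) := by decide
  have hE : specC g = T.map ι := by
    rw [hg, specC_diag, huniv, hT]
    simp only [Multiset.map_coe, List.map, hι, e0, e1, e2, e3, e4, e5, e6, e7, e8]
    norm_num [Matrix.cons_val_zero, Matrix.cons_val_one, Matrix.head_cons, Matrix.cons_val_two, Matrix.cons_val_three]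
  -- abbreviations for logs
  set L := Real.log lam with hL
  set M := Real.log mu with hM'
  set X := Real.log x with hX'
  have hM : 0 < M := Real.log_pos hmu
  have hX : 0 < X := Real.log_pos hx1
  have hA : 3*X < L := by
    have := Real.log_lt_log (by positivity) h1
    rwa [Real.log_pow, Nat.cast_ofNat] at this
  have hBlog : L - 2*M < 3*X := by
    have := Real.log_lt_log (lt_trans one_pos h3) h2
    rwa [Real.log_div (ne_of_gt hlam) (by positivity), Real.log_pow, Real.log_pow,
      Nat.cast_ofNat, Nat.cast_ofNat] at this
  have hClog : 0 < L - 2*M := by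
    have := Real.log_pos h3
    rwa [Real.log_div (ne_of_gt hlam) (by positivity), Real.log_pow, Nat.cast_ofNat] at this
  -- moduli of the classes
  have hcases : ∀ i : Fin 9, i = 0 ∨ i = 1 ∨ i = 2 ∨ i = 3 ∨ i = 4 ∨ i = 5 ∨ i = 6 ∨ i = 7
      ∨ i = 8 := by decide
  have habsρ : ∀ i : Fin 9, 0 < |ρ i| := by
    intro i
    rw [abs_pos]
    rcases hcases i with rfl|rfl|rfl|rfl|rfl|rfl|rfl|rfl|rfl <;>
      simp only [e0, e1, e2, e3, e4, e5, e6, e7, e8, mul_neg, neg_ne_zero] <;> positivity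
  have w0 : Real.log |ρ 0| = (L-X+2*M) := by
    rw [e0, abs_mul, abs_of_pos (by positivity), abs_neg, abs_of_pos (by positivity),
      Real.log_mul (by positivity) (by positivity), Real.log_pow,
      Real.log_div (ne_of_gt hlam) (ne_of_gt hx)]
    push_cast; ring
  have w1 : Real.log |ρ 1| = (2*X+2*M) := by
    rw [e1, abs_mul, abs_of_pos (by positivity), abs_of_pos (by positivity),
      Real.log_mul (by positivity) (by positivity), Real.log_pow, Real.log_pow]
    push_cast; ring
  have w2 : Real.log |ρ 2| = (-L-X+2*M) := by
    rw [e2, abs_mul, abs_of_pos (by positivity), abs_neg, abs_of_pos (by positivity),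
      Real.log_mul (by positivity) (by positivity), Real.log_pow,
      Real.log_div one_ne_zero (ne_of_gt hlx), Real.log_mul (ne_of_gt hlam) (ne_of_gt hx),
      Real.log_one]
    push_cast; ring
  have w3 : Real.log |ρ 3| = (L-X) := by
    rw [e3, abs_neg, abs_of_pos (by positivity), Real.log_div (ne_of_gt hlam) (ne_of_gt hx)]
  have w4 : Real.log |ρ 4| = (2*X) := by
    rw [e4, abs_of_pos (by positivity), Real.log_pow]; push_cast; ring
  have w5 : Real.log |ρ 5| = (-L-X) := by
    rw [e5, abs_neg, abs_of_pos (by positivity),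
      Real.log_div one_ne_zero (ne_of_gt hlx), Real.log_mul (ne_of_gt hlam) (ne_of_gt hx),
      Real.log_one]
    ring
  have hlogmuinv : Real.log (mu⁻¹^2) = -(2*M) := by
    rw [Real.log_pow, Real.log_inv]; push_cast; ring
  have w6 : Real.log |ρ 6| = (L-X-2*M) := by
    rw [e6, abs_mul, abs_of_pos (by positivity), abs_neg, abs_of_pos (by positivity),
      Real.log_mul (by positivity) (by positivity), hlogmuinv,
      Real.log_div (ne_of_gt hlam) (ne_of_gt hx)]
    ring
  have w7 : Real.log |ρ 7| = (2*X-2*M) := by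
    rw [e7, abs_mul, abs_of_pos (by positivity), abs_of_pos (by positivity),
      Real.log_mul (by positivity) (by positivity), hlogmuinv, Real.log_pow]
    push_cast; ring
  have w8 : Real.log |ρ 8| = (-L-X-2*M) := by
    rw [e8, abs_mul, abs_of_pos (by positivity), abs_neg, abs_of_pos (by positivity),
      Real.log_mul (by positivity) (by positivity), hlogmuinv,
      Real.log_div one_ne_zero (ne_of_gt hlx), Real.log_mul (ne_of_gt hlam) (ne_of_gt hx),
      Real.log_one]
    ring
  have hTpos : (0:ℝ) < lam ^ 3 * mu ^ 4 * x := by positivity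
  have hlogT : Real.log (lam ^ 3 * mu ^ 4 * x) = 3*L + X + 4*M := by
    rw [Real.log_mul (by positivity) (ne_of_gt hx), Real.log_mul (by positivity) (by positivity),
      Real.log_pow, Real.log_pow]
    push_cast; ring
  -- product and count formulas
  have hprodform : ∀ t : Multiset (Fin 9),
      ‖(t.map ι).prod‖ = ∏ i : Fin 9, |ρ i| ^ t.count i := by
    intro t
    show normHom ((t.map ι).prod) = _
    rw [map_multiset_prod, Multiset.map_map]
    have : (Multiset.map (normHom ∘ ι) t) = Multiset.map (fun i => |ρ i|) t := by
      apply Multiset.map_congr rfl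
      intro i _
      simp [hι, normHom, Complex.norm_real]
    rw [this, Finset.prod_multiset_map_count]
    exact Finset.prod_subset (Finset.subset_univ _) (by
      intro i _ hi
      rw [Multiset.count_eq_zero_of_notMem (by simpa using hi), pow_zero])
  have hsumform : ∀ t : Multiset (Fin 9), ∑ i : Fin 9, t.count i = Multiset.card t := by
    intro t
    rw [← Multiset.toFinset_sum_count_eq]
    exact (Finset.sum_subset (Finset.subset_univ _) (by
      intro i _ hi
      exact Multiset.count_eq_zero_of_notMem (by simpa using hi))).symm
  -- the two maximizing subsets give exactly -lam^3 mu^4 x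
  have hT₀prod : ((T₀.map ι).prod) = ((-(lam ^ 3 * mu ^ 4 * x) : ℝ) : ℂ) := by
    rw [hT₀]
    simp only [Multiset.map_coe, List.map, Multiset.prod_coe, List.prod_cons, List.prod_nil,
      hι, e0, e1, e3, e4]
    norm_cast
    field_simp
  -- the key strict bound for non-maximal subsets
  have key : ∀ t : Multiset (Fin 9), t ≤ T → Multiset.card t = 5 → t ≠ T₀ →
      ‖(t.map ι).prod‖ < lam ^ 3 * mu ^ 4 * x := by
    intro t htle hcard hne
    have hcnt : ∀ i : Fin 9, t.count i ≤ T.count i := fun i => Multiset.count_le_of_le i htle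
    have c0 := hcnt 0; have c1 := hcnt 1; have c2 := hcnt 2
    have c3 := hcnt 3; have c4 := hcnt 4; have c5 := hcnt 5
    have c6 := hcnt 6; have c7 := hcnt 7; have c8 := hcnt 8
    rw [show T.count 0 = 1 from by decide] at c0
    rw [show T.count 1 = 1 from by decide] at c1
    rw [show T.count 2 = 1 from by decide] at c2
    rw [show T.count 3 = 2 from by decide] at c3
    rw [show T.count 4 = 2 from by decide] at c4
    rw [show T.count 5 = 2 from by decide] at c5
    rw [show T.count 6 = 1 from by decide] at c6
    rw [show T.count 7 = 1 from by decide] at c7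
    rw [show T.count 8 = 1 from by decide] at c8
    have hsum9 : t.count 0 + t.count 1 + t.count 2 + t.count 3 + t.count 4 + t.count 5
        + t.count 6 + t.count 7 + t.count 8 = 5 := by
      have h := hsumform t
      rw [hcard, sum9] at h
      omega
    have hnemax : ¬(t.count 0 = 1 ∧ t.count 1 = 1 ∧ t.count 3 = 2 ∧ t.count 4 = 1) := by
      rintro ⟨m0, m1, m3, m4⟩
      apply hne
      have z2 : t.count 2 = 0 := by omega
      have z5 : t.count 5 = 0 := by omega
      have z6 : t.count 6 = 0 := by omega
      have z7 : t.count 7 = 0 := by omega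
      have z8 : t.count 8 = 0 := by omega
      ext a
      rcases hcases a with rfl|rfl|rfl|rfl|rfl|rfl|rfl|rfl|rfl <;>
        simp only [m0, m1, m3, m4, z2, z5, z6, z7, z8, hT₀] <;> decide
    have hpos : (0:ℝ) < ∏ i : Fin 9, |ρ i| ^ t.count i := by
      apply Finset.prod_pos
      intro i _
      exact pow_pos (habsρ i) _
    rw [hprodform t, ← Real.log_lt_log_iff hpos hTpos, hlogT]
    rw [Real.log_prod (fun i _ => ne_of_gt (pow_pos (habsρ i) _))]
    rw [sum9]
    simp only [Real.log_pow, w0, w1, w2, w3, w4, w5, w6, w7, w8]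
    have := master L M X hM hX hA hBlog hClog
      (t.count 0) (t.count 1) (t.count 2) (t.count 3) (t.count 4) (t.count 5)
      (t.count 6) (t.count 7) (t.count 8) c0 c1 c2 c3 c4 c5 c6 c7 c8 (by omega) hnemax
    linarith
  have hwedge : wedgeSpec 5 g = (Multiset.powersetCard 5 T).map (fun t => (t.map ι).prod) := by
    rw [wedgeSpec, hE, Multiset.powersetCard_map, Multiset.map_map]
    rfl
  refine ⟨?_, ?_, ?_⟩
  · -- count = 2
    rw [hwedge, Multiset.count_map]
    have hfilter : Multiset.filter
        (fun t => ((-(lam^3*mu^4*x):ℝ):ℂ) = (Multiset.map ι t).prod)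
        (Multiset.powersetCard 5 T)
        = Multiset.filter (fun t => t = T₀) (Multiset.powersetCard 5 T) := by
      apply Multiset.filter_congr
      intro t htmem
      rcases Multiset.mem_powersetCard.mp htmem with ⟨hle, hc⟩
      constructor
      · intro hv
        by_contra hne
        have hk := key t hle hc hne
        rw [← hv, Complex.norm_real, Real.norm_eq_abs, abs_neg, abs_of_pos hTpos] at hk
        exact lt_irrefl _ hk
      · rintro rfl
        exact hT₀prod.symm
    rw [hfilter, Multiset.filter_eq', Multiset.card_replicate]
    rw [hT₀, hT]
    decide
  · -- strict bound
    intro z hz hzne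
    rw [hwedge] at hz
    rcases Multiset.mem_map.mp hz with ⟨t, htmem, rfl⟩
    rcases Multiset.mem_powersetCard.mp htmem with ⟨hle, hc⟩
    have htne : t ≠ T₀ := by
      rintro rfl
      exact hzne hT₀prod
    exact key t hle hc htne
  · -- positive value not an eigenvalue
    intro hmem
    rw [hwedge] at hmem
    rcases Multiset.mem_map.mp hmem with ⟨t, htmem, hteq⟩
    rcases Multiset.mem_powersetCard.mp htmem with ⟨hle, hc⟩
    have htne : t ≠ T₀ := by
      rintro rfl
      rw [hT₀prod] at hteq
      have := Complex.ofReal_inj.mp hteq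
      linarith
    have hk := key t hle hc htne
    rw [hteq, Complex.norm_real, Real.norm_eq_abs, abs_of_pos hTpos] at hk
    exact lt_irrefl _ hk
end

section
/- Let n ≥ 2 and s < -1 a real number. Let g be the 3n×3n real matrix given by the Kronecker product diag(s², 1, ..., 1, s⁻²) ⊗ diag(s, 1, 1/s), where the first factor is n×n with n−2 middle entries equal to 1. Then the eigenvalues of g of modulus greater than 1, in decreasing order of modulus, are s³ (once), s² (once), and s with multiplicity n−1; moreover for every even i with 2 ≤ i ≤ n+1, the maximal modulus of the eigenvalues of ∧^i g is |s³·s²·s^{i-2}| = |s|^{i+3}, and ∧^i g is not positively semiproximal. -/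
open Matrix Polynomial

lemma aux_prod_map_zpow (s : ℝ) (hs : s ≠ 0) (T : Multiset ℤ) :
    (T.map fun e => ((s ^ e : ℝ) : ℂ)).prod = ((s ^ T.sum : ℝ) : ℂ) := by
  induction T using Multiset.induction with
  | empty => simp
  | cons a T ih =>
    rw [Multiset.map_cons, Multiset.prod_cons, Multiset.sum_cons, ih, zpow_add₀ hs,
      Complex.ofReal_mul]

lemma aux_sum_map_ite (a c : ℤ) (T : Multiset ℤ) :
    (T.map fun t => if t = a then c else 0).sum = c * T.count a := by
  induction T using Multiset.induction with
  | empty => simp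
  | cons b T ih =>
    by_cases h : b = a
    · subst h; simp [ih, Multiset.count_cons, mul_add, add_comm]
    · simp [ih, Multiset.count_cons, h, Ne.symm h]

lemma aux_bind_const {α β : Type*} (s : Multiset α) (t : Multiset β) :
    (s.bind fun _ => t) = Multiset.card s • t := by
  induction s using Multiset.induction with
  | empty => simp
  | cons a s ih =>
    rw [Multiset.cons_bind, ih, Multiset.card_cons, succ_nsmul, add_comm]

lemma aux_charmatrix_diagonal {m : Type*} [Fintype m] [DecidableEq m] (d : m → ℂ) :
    charmatrix (Matrix.diagonal d) = Matrix.diagonal fun i => (X : ℂ[X]) - C (d i) := by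
  ext i j
  by_cases h : i = j
  · subst h; simp [charmatrix_apply_eq, Matrix.diagonal_apply_eq]
  · simp [charmatrix_apply_ne _ _ _ h, Matrix.diagonal_apply_ne _ h]

lemma aux_specC_diagonal {m : Type*} [Fintype m] [DecidableEq m] (d : m → ℝ) :
    specC (Matrix.diagonal d) = Finset.univ.val.map fun i => ((d i : ℝ) : ℂ) := by
  unfold specC
  rw [Matrix.diagonal_map (by simp)]
  rw [Matrix.charpoly, aux_charmatrix_diagonal, Matrix.det_diagonal]
  have h1 : (∏ i, ((X : ℂ[X]) - C ((algebraMap ℝ ℂ) (d i))))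
      = ((Finset.univ.val.map fun i => ((d i : ℝ) : ℂ)).map fun a => X - C a).prod := by
    rw [Multiset.map_map]; rfl
  rw [h1, Polynomial.roots_multiset_prod_X_sub_C]

lemma aux_bind_univ_fin (n : ℕ) (hn : 2 ≤ n) (f : Fin n → Multiset ℤ) (c : Multiset ℤ)
    (hmid : ∀ j : Fin n, (j : ℕ) ≠ 0 → (j : ℕ) ≠ n - 1 → f j = c) :
    Finset.univ.val.bind f
      = f ⟨0, by omega⟩ + (f ⟨n - 1, by omega⟩ + (n - 2) • c) := by
  set j0 : Fin n := ⟨0, by omega⟩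
  set jl : Fin n := ⟨n - 1, by omega⟩
  have hne : jl ≠ j0 := by
    simp only [j0, jl, Ne, Fin.mk.injEq]
    omega
  have h1 : (Finset.univ : Finset (Fin n)).val = j0 ::ₘ (Finset.univ.erase j0).val := by
    rw [Finset.erase_val]
    exact (Multiset.cons_erase (Finset.mem_univ j0)).symm
  have hjl : jl ∈ Finset.univ.erase j0 := Finset.mem_erase.2 ⟨hne, Finset.mem_univ _⟩
  have h2 : (Finset.univ.erase j0).val
      = jl ::ₘ ((Finset.univ.erase j0).erase jl).val := by
    rw [Finset.erase_val]
    exact (Multiset.cons_erase hjl).symm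
  have hcard : Multiset.card ((Finset.univ.erase j0).erase jl).val = n - 2 := by
    show ((Finset.univ.erase j0).erase jl).card = n - 2
    rw [Finset.card_erase_of_mem hjl, Finset.card_erase_of_mem (Finset.mem_univ _)]
    simp [Finset.card_univ]
    omega
  have hmid' : ∀ j ∈ ((Finset.univ.erase j0).erase jl).val, f j = c := by
    intro j hj
    rw [Finset.mem_val, Finset.mem_erase, Finset.mem_erase] at hj
    refine hmid j ?_ ?_
    · intro h; exact hj.2.1 (Fin.ext h)
    · intro h; exact hj.1 (Fin.ext h)
  rw [h1, Multiset.cons_bind, h2, Multiset.cons_bind,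
    Multiset.bind_congr hmid', aux_bind_const, hcard]

lemma aux_abs_zpow (x : ℝ) (n : ℤ) : |x ^ n| = |x| ^ n := by
  rcases le_or_gt 0 n with h | h
  · lift n to ℕ using h
    rw [zpow_natCast, zpow_natCast, abs_pow]
  · have h2 : (0:ℤ) ≤ -n := by omega
    lift -n to ℕ using h2 with m hm
    rw [show n = -(m:ℤ) by omega, _root_.zpow_neg, _root_.zpow_neg, abs_inv,
      zpow_natCast, zpow_natCast, abs_pow]


set_option maxHeartbeats 4000000 in
/-- for `n ≥ 2`, `s < -1` and
`g = diag(s²,1,...,1,s⁻²) ⊗ diag(s,1,1/s)` (the first factor `n×n`), the eigenvalues of `g`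
of modulus `> 1` are `s³` (once), `s²` (once) and `s` with multiplicity `n−1`; moreover for
every even `i` with `2 ≤ i ≤ n+1`, the maximal modulus of an eigenvalue of `∧^i g` is
`|s³·s²·s^{i-2}| = |s|^{i+3}`, and `∧^i g` is not positively semiproximal. -/
theorem stmt_9 (n : ℕ) (hn : 2 ≤ n) (s : ℝ) (hs : s < -1) :
    let g : Matrix (Fin n × Fin 3) (Fin n × Fin 3) ℝ :=
      Matrix.kroneckerMap (· * ·)
        (Matrix.diagonal (fun j : Fin n =>
          if (j : ℕ) = 0 then s ^ 2 else if (j : ℕ) = n - 1 then s⁻¹ ^ 2 else 1))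
        (Matrix.diagonal ![s, 1, s⁻¹])
    (@Multiset.filter ℂ (fun z => 1 < ‖z‖) (Classical.decPred _) (specC g) =
      ((s ^ 3 : ℝ) : ℂ) ::ₘ ((s ^ 2 : ℝ) : ℂ) ::ₘ Multiset.replicate (n - 1) ((s : ℝ) : ℂ)) ∧
    ∀ i : ℕ, 2 ≤ i → i ≤ n + 1 → Even i →
      (∀ z ∈ wedgeSpec i g, ‖z‖ ≤ |s| ^ (i + 3)) ∧
      (∃ z ∈ wedgeSpec i g, ‖z‖ = |s| ^ (i + 3)) ∧
      ((|s| ^ (i + 3) : ℝ) : ℂ) ∉ wedgeSpec i g := by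
  intro g
  have hs0 : s ≠ 0 := by intro h; rw [h] at hs; linarith
  have hsneg : s < 0 := by linarith
  have hs1 : (1:ℝ) < |s| := by rw [abs_of_neg hsneg]; linarith
  set eA : Fin n → ℤ := fun j => if (j : ℕ) = 0 then 2 else if (j : ℕ) = n - 1 then -2 else 0
    with heA
  set eB : Fin 3 → ℤ := ![1, 0, -1] with heB
  -- the diagonal entries as integer powers of s
  have hg : g = Matrix.diagonal (fun p : Fin n × Fin 3 => s ^ (eA p.1 + eB p.2)) := by
    have hdiag : ∀ p : Fin n × Fin 3,
        (if ((p.1 : Fin n) : ℕ) = 0 then s ^ 2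
          else if ((p.1 : Fin n) : ℕ) = n - 1 then s⁻¹ ^ 2 else 1) * (![s, 1, s⁻¹] p.2)
        = s ^ (eA p.1 + eB p.2) := by
      rintro ⟨j, k⟩
      have hb : (![s, 1, s⁻¹] : Fin 3 → ℝ) k = s ^ (eB k) := by
        fin_cases k <;> simp [heB]
      have ha : (if (j : ℕ) = 0 then s ^ 2 else if (j : ℕ) = n - 1 then s⁻¹ ^ 2 else 1)
          = s ^ (eA j) := by
        rw [heA]
        by_cases h0 : (j : ℕ) = 0
        · simp [h0, zpow_ofNat]
        · by_cases h1 : (j : ℕ) = n - 1 <;>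
            simp [h0, h1, _root_.zpow_neg, inv_pow, zpow_ofNat]
      dsimp only
      rw [ha, hb, ← zpow_add₀ hs0]
    show Matrix.kroneckerMap (· * ·) _ _ = _
    rw [Matrix.diagonal_kronecker_diagonal]
    exact congrArg Matrix.diagonal (funext hdiag)
  have hspec : specC g
      = (Finset.univ.val.map fun p : Fin n × Fin 3 => eA p.1 + eB p.2).map
          (fun e => ((s ^ e : ℝ) : ℂ)) := by
    rw [hg, aux_specC_diagonal, Multiset.map_map]
    rfl
  set M : Multiset ℤ := Finset.univ.val.map fun p : Fin n × Fin 3 => eA p.1 + eB p.2 with hMdef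
  -- compute M explicitly
  have hMb : M = Finset.univ.val.bind
      (fun j : Fin n => Finset.univ.val.map fun k : Fin 3 => eA j + eB k) := by
    rw [hMdef, ← Finset.univ_product_univ, Finset.product_val]
    show Multiset.map _ (Finset.univ.val.bind fun a => Finset.univ.val.map (Prod.mk a)) = _
    rw [Multiset.map_bind]
    simp [Multiset.map_map, Function.comp_def]
  have hf : ∀ j : Fin n,
      (Finset.univ.val.map fun k : Fin 3 => eA j + eB k) = {eA j + 1, eA j + 0, eA j + -1} := by
    intro j
    have : (Finset.univ.val : Multiset (Fin 3)) = {0, 1, 2} := rfl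
    rw [this]
    simp [heB]
  have hM : M = ({3, 2, 1} : Multiset ℤ)
      + (({-1, -2, -3} : Multiset ℤ) + (n - 2) • ({1, 0, -1} : Multiset ℤ)) := by
    rw [hMb]
    rw [aux_bind_univ_fin n hn _ ({1, 0, -1} : Multiset ℤ)
      (fun j h0 h1 => by rw [hf]; simp [heA, h0, h1])]
    rw [hf, hf]
    have h0 : ¬ (n - 1 = 0) := by omega
    norm_num [heA, h0]
  set Mtop : Multiset ℤ := 3 ::ₘ 2 ::ₘ Multiset.replicate (n-1) 1 with hMtop
  set Mrest : Multiset ℤ := Multiset.replicate (n-2) 0 + Multiset.replicate (n-1) (-1) + {-2, -3}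
    with hMrest
  have hM2 : M = Mtop + Mrest := by
    rw [hM, hMtop, hMrest]
    have e1 : ({1, 0, -1} : Multiset ℤ) = {1} + ({0} + {-1}) := by
      rfl
    rw [e1, smul_add, smul_add, Multiset.nsmul_singleton, Multiset.nsmul_singleton,
      Multiset.nsmul_singleton]
    have e2 : Multiset.replicate (n-1) (1:ℤ) = 1 ::ₘ Multiset.replicate (n-2) 1 := by
      rw [show n - 1 = (n-2)+1 from by omega, Multiset.replicate_succ]
    have e3 : Multiset.replicate (n-1) (-1:ℤ) = -1 ::ₘ Multiset.replicate (n-2) (-1) := by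
      rw [show n - 1 = (n-2)+1 from by omega, Multiset.replicate_succ]
    rw [e2, e3]
    ext a
    simp only [Multiset.count_cons, Multiset.count_add, Multiset.count_replicate,
      Multiset.count_singleton, Multiset.insert_eq_cons]
    split_ifs <;> omega
  have habs : ∀ e : ℤ, ‖((s ^ e : ℝ) : ℂ)‖ = |s| ^ e := by
    intro e
    rw [Complex.norm_real, Real.norm_eq_abs, aux_abs_zpow]
  constructor
  · rw [hspec, Multiset.filter_map]
    have hfil : Multiset.filter ((fun z => 1 < ‖z‖) ∘ fun e => ((s ^ e : ℝ) : ℂ)) M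
        = Multiset.filter (fun e => 0 < e) M := by
      apply Multiset.filter_congr
      intro e _
      show (1 < ‖((s ^ e : ℝ) : ℂ)‖) ↔ 0 < e
      rw [habs e, show (1:ℝ) = |s| ^ (0:ℤ) from (zpow_zero _).symm]
      exact (zpow_right_strictMono₀ hs1).lt_iff_lt
    rw [hfil, hM2, Multiset.filter_add]
    have h1 : Multiset.filter (fun e => 0 < e) Mtop = Mtop := by
      rw [Multiset.filter_eq_self]
      intro a ha
      rw [hMtop] at ha
      simp only [Multiset.mem_cons, Multiset.mem_replicate] at ha
      rcases ha with h | h | ⟨-, h⟩ <;> omega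
    have h2 : Multiset.filter (fun e => 0 < e) Mrest = 0 := by
      rw [Multiset.filter_eq_nil]
      intro a ha
      rw [hMrest] at ha
      simp only [Multiset.mem_add, Multiset.mem_replicate, Multiset.mem_cons,
        Multiset.mem_singleton, Multiset.insert_eq_cons] at ha
      rcases ha with (⟨-, h⟩ | ⟨-, h⟩) | h | h <;> omega
    rw [h1, h2, add_zero, hMtop, Multiset.map_cons, Multiset.map_cons, Multiset.map_replicate,
      zpow_ofNat, zpow_ofNat, zpow_one]
  · intro i hi2 hin hev
    have hw : wedgeSpec i g = (M.powersetCard i).map (fun T => ((s ^ T.sum : ℝ) : ℂ)) := by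
      unfold wedgeSpec
      rw [hspec, Multiset.powersetCard_map, Multiset.map_map]
      apply Multiset.map_congr rfl
      intro T _
      exact aux_prod_map_zpow s hs0 T
    have hc3 : M.count 3 = 1 := by
      rw [hM2, hMtop, hMrest]
      simp only [Multiset.count_add, Multiset.count_cons, Multiset.count_replicate,
        Multiset.count_singleton, Multiset.insert_eq_cons]
      norm_num
    have hc2 : M.count 2 = 1 := by
      rw [hM2, hMtop, hMrest]
      simp only [Multiset.count_add, Multiset.count_cons, Multiset.count_replicate,
        Multiset.count_singleton, Multiset.insert_eq_cons]
      norm_num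
    have hsum : ∀ T : Multiset ℤ, T ≤ M → Multiset.card T = i → T.sum ≤ (i:ℤ) + 3 := by
      intro T hT hcard
      have hmemb : ∀ t ∈ T,
          t ≤ 1 + ((if t = 3 then (2:ℤ) else 0) + (if t = 2 then (1:ℤ) else 0)) := by
        intro t ht0
        have ht := Multiset.mem_of_le hT ht0
        have ht' : t = 3 ∨ t = 2 ∨ t = 1 ∨ t = 0 ∨ t = -1 ∨ t = -2 ∨ t = -3 := by
          rw [hM2, hMtop, hMrest] at ht
          simp only [Multiset.mem_add, Multiset.mem_cons, Multiset.mem_replicate,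
            Multiset.mem_singleton, Multiset.insert_eq_cons] at ht
          tauto
        rcases ht' with rfl | rfl | rfl | rfl | rfl | rfl | rfl <;> norm_num
      have h1 : T.sum ≤ (T.map fun t =>
          (1:ℤ) + ((if t = 3 then (2:ℤ) else 0) + (if t = 2 then (1:ℤ) else 0))).sum := by
        have := Multiset.sum_le_sum_map
          (fun t => (1:ℤ) + ((if t = 3 then (2:ℤ) else 0) + (if t = 2 then (1:ℤ) else 0))) hmemb
        exact this
      rw [Multiset.sum_map_add, Multiset.sum_map_add, Multiset.map_const',
        Multiset.sum_replicate, aux_sum_map_ite, aux_sum_map_ite, hcard] at h1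
      have hc3' : T.count 3 ≤ 1 := hc3 ▸ Multiset.count_le_of_le 3 hT
      have hc2' : T.count 2 ≤ 1 := hc2 ▸ Multiset.count_le_of_le 2 hT
      have hsm : (i • (1:ℤ)) = (i:ℤ) := by simp
      rw [hsm] at h1
      omega
    have hcast : ((i:ℤ)+3) = ((i+3 : ℕ) : ℤ) := by push_cast; ring
    refine ⟨?_, ?_, ?_⟩
    · intro z hz
      rw [hw] at hz
      obtain ⟨T, hT, rfl⟩ := Multiset.mem_map.1 hz
      obtain ⟨hTM, hTc⟩ := Multiset.mem_powersetCard.1 hT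
      rw [habs]
      calc |s| ^ T.sum ≤ |s| ^ ((i:ℤ) + 3) := zpow_le_zpow_right₀ hs1.le (hsum T hTM hTc)
        _ = |s| ^ (i+3) := by rw [hcast, zpow_natCast]
    · refine ⟨((s ^ ((i:ℤ)+3) : ℝ) : ℂ), ?_, ?_⟩
      · rw [hw]
        apply Multiset.mem_map.2
        refine ⟨(3 : ℤ) ::ₘ 2 ::ₘ Multiset.replicate (i-2) 1, ?_, ?_⟩
        · apply Multiset.mem_powersetCard.2
          constructor
          · have hle : (3:ℤ) ::ₘ 2 ::ₘ Multiset.replicate (i-2) 1 ≤ Mtop := by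
              rw [hMtop]
              exact Multiset.cons_le_cons _ (Multiset.cons_le_cons _
                ((Multiset.replicate_le_replicate _).2 (by omega)))
            exact hle.trans (hM2 ▸ Multiset.le_add_right _ _)
          · simp only [Multiset.card_cons, Multiset.card_replicate]
            omega
        · have hsum0 : ((3:ℤ) ::ₘ 2 ::ₘ Multiset.replicate (i-2) 1).sum = (i:ℤ)+3 := by
            rw [Multiset.sum_cons, Multiset.sum_cons, Multiset.sum_replicate, nsmul_eq_mul]
            omega
          rw [hsum0]
      · rw [habs, hcast, zpow_natCast]
    · intro hmem
      rw [hw] at hmem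
      obtain ⟨T, hT, hEq⟩ := Multiset.mem_map.1 hmem
      obtain ⟨hTM, hTc⟩ := Multiset.mem_powersetCard.1 hT
      have hreal : s ^ T.sum = |s| ^ (i+3) := Complex.ofReal_inj.1 hEq
      have habs2 : |s| ^ T.sum = |s| ^ ((i+3:ℕ):ℤ) := by
        have h := congrArg (fun x : ℝ => |x|) hreal
        simp only [aux_abs_zpow] at h
        rw [h, abs_of_nonneg (pow_nonneg (abs_nonneg s) _), zpow_natCast]
      have hTsum : T.sum = ((i+3:ℕ):ℤ) := (zpow_right_strictMono₀ hs1).injective habs2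
      rw [hTsum, zpow_natCast] at hreal
      have hodd : Odd (i+3) := by
        rcases hev with ⟨k, hk⟩
        exact ⟨k+1, by omega⟩
      have hneg : s ^ (i+3) < 0 := hodd.pow_neg hsneg
      have hpos : (0:ℝ) < |s| ^ (i+3) := pow_pos (by linarith) _
      rw [hreal] at hneg
      linarith
end

section
/- Let λ be a real number with |λ| > 1, let s > |λ|^{2/3}, and let θ be a real number with sin θ ≠ 0. Let g = diag(λ, 1/λ) ∈ SL(2,ℝ) and let h ∈ SL(3,ℝ) be the block matrix with upper-left 2×2 block s·R_θ (the rotation by angle θ scaled by s) and lower-right entry 1/s². Then the eigenvalues of the Kronecker product g ⊗ h ∈ SL(6,ℝ) of maximal modulus are exactly λ s e^{iθ} and λ s e^{-iθ}, which are non-real. In particular g ⊗ h is not semiproximal. -/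
open Matrix Polynomial

noncomputable def Bm (s θ d : ℝ) : Matrix (Fin 3) (Fin 3) ℝ :=
  !![d*(s*Real.cos θ), d*(-(s*Real.sin θ)), 0;
     d*(s*Real.sin θ), d*(s*Real.cos θ), 0;
     0, 0, d*(s⁻¹^2)]

lemma aux3 (s θ d : ℝ) :
    ((Bm s θ d).map (algebraMap ℝ ℂ)).charpoly
      = (X - C (((d*s : ℝ) : ℂ) * Complex.exp (θ * Complex.I))) *
        ((X - C (((d*s : ℝ) : ℂ) * Complex.exp (-(θ * Complex.I)))) *
        (X - C ((d * s⁻¹^2 : ℝ) : ℂ))) := by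
  have h1 : ((d*s : ℝ) : ℂ) * Complex.exp (θ * Complex.I)
      + ((d*s : ℝ) : ℂ) * Complex.exp (-(θ * Complex.I))
      = ((2*(d*s)*Real.cos θ : ℝ) : ℂ) := by
    have : -((θ:ℂ) * Complex.I) = ((-θ : ℝ) : ℂ) * Complex.I := by push_cast; ring
    rw [this, Complex.exp_mul_I, Complex.exp_mul_I]
    push_cast
    simp [Complex.cos_neg, Complex.sin_neg]
    ring
  have h2 : (((d*s : ℝ) : ℂ) * Complex.exp (θ * Complex.I))
      * (((d*s : ℝ) : ℂ) * Complex.exp (-(θ * Complex.I)))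
      = (((d*s)*(d*s) : ℝ) : ℂ) := by
    rw [mul_mul_mul_comm, ← Complex.exp_add, add_neg_cancel, Complex.exp_zero]
    push_cast; ring
  have key : ∀ a b c : ℂ, (X - C a) * ((X - C b) * (X - C c))
      = (X^2 - C (a+b) * X + C (a*b)) * (X - C c) := by
    intro a b c; simp only [C_add, C_mul]; ring
  rw [key, h1, h2]
  rw [Matrix.charpoly, Matrix.det_fin_three]
  simp [charmatrix_apply, Bm, Matrix.diagonal_apply]
  apply Polynomial.funext
  intro x
  have hpy : (Real.sin θ : ℂ)^2 + (Real.cos θ : ℂ)^2 = 1 := by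
    exact_mod_cast Real.sin_sq_add_cos_sq θ
  simp [eval_mul, eval_add, eval_sub, eval_pow, ← Complex.ofReal_cos, ← Complex.ofReal_sin]
  push_cast
  linear_combination (x * (d:ℂ)^2 * (s:ℂ)^2 - (d:ℂ)^3 * (s:ℂ)^2 * ((s:ℂ))⁻¹^2) * (Complex.sin_sq_add_cos_sq (θ:ℂ))

def e23 : Fin 2 × Fin 3 ≃ Fin 3 ⊕ Fin 3 where
  toFun p := if p.1 = 0 then Sum.inl p.2 else Sum.inr p.2
  invFun x := Sum.elim (fun j => ((0 : Fin 2), j)) (fun j => ((1 : Fin 2), j)) x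
  left_inv := by decide
  right_inv := by decide

lemma e23_symm_inl (j : Fin 3) : e23.symm (Sum.inl j) = (0, j) := rfl
lemma e23_symm_inr (j : Fin 3) : e23.symm (Sum.inr j) = (1, j) := rfl

lemma charK (lam s θ : ℝ) :
    (Matrix.kroneckerMap (· * ·) (Matrix.diagonal ![lam, lam⁻¹])
      (!![s * Real.cos θ, -(s * Real.sin θ), 0;
         s * Real.sin θ, s * Real.cos θ, 0;
         0, 0, s⁻¹ ^ 2] : Matrix (Fin 3) (Fin 3) ℝ)).charpoly
    = (Bm s θ lam).charpoly * (Bm s θ lam⁻¹).charpoly := by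
  rw [← Matrix.charpoly_reindex e23]
  have : (reindex e23 e23) (Matrix.kroneckerMap (· * ·) (Matrix.diagonal ![lam, lam⁻¹])
      (!![s * Real.cos θ, -(s * Real.sin θ), 0;
         s * Real.sin θ, s * Real.cos θ, 0;
         0, 0, s⁻¹ ^ 2] : Matrix (Fin 3) (Fin 3) ℝ))
      = fromBlocks (Bm s θ lam) 0 0 (Bm s θ lam⁻¹) := by
    ext i j
    rcases i with i | i <;> rcases j with j | j <;>
      fin_cases i <;> fin_cases j <;>
      simp [e23_symm_inl, e23_symm_inr, Matrix.kroneckerMap_apply, Bm,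
        Matrix.diagonal_apply, Fin.ext_iff]
  rw [this, Matrix.charpoly_fromBlocks_zero₁₂]

/-- for `|λ| > 1`, `s > |λ|^{2/3}`, `sin θ ≠ 0`, the eigenvalues of maximal
modulus of `diag(λ,1/λ) ⊗ (s·R_θ ⊕ 1/s²)` are exactly the non-real numbers `λse^{±iθ}`;
in particular this matrix is not semiproximal. -/
theorem stmt_10 (lam s θ : ℝ) (hlam : 1 < |lam|) (hs : |lam| ^ ((2 : ℝ)/3) < s)
    (hθ : Real.sin θ ≠ 0) :
    let g : Matrix (Fin 2) (Fin 2) ℝ := Matrix.diagonal ![lam, lam⁻¹]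
    let h : Matrix (Fin 3) (Fin 3) ℝ :=
      !![s * Real.cos θ, -(s * Real.sin θ), 0;
         s * Real.sin θ, s * Real.cos θ, 0;
         0, 0, s⁻¹ ^ 2]
    let K := Matrix.kroneckerMap (· * ·) g h
    let v : ℂ := (lam * s : ℝ) * Complex.exp (θ * Complex.I)
    v ∈ specC K ∧ (starRingEnd ℂ) v ∈ specC K ∧
    (∀ z ∈ specC K, ‖z‖ ≤ ‖v‖) ∧
    (∀ z ∈ specC K, ‖z‖ = ‖v‖ → z = v ∨ z = (starRingEnd ℂ) v) ∧
    v.im ≠ 0 ∧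
    ¬ (K.charpoly).IsRoot (‖v‖) ∧ ¬ (K.charpoly).IsRoot (-(‖v‖)) := by
  intro g h K v
  -- basic facts
  set L := |lam| with hLdef
  have hL1 : (1:ℝ) < L := hlam
  have hL0 : 0 < L := lt_trans one_pos hL1
  have hlam0 : lam ≠ 0 := abs_pos.1 hL0
  have hs1 : (1:ℝ) < s := by
    refine lt_trans ?_ hs
    rw [show ((2:ℝ)/3) = (2/3 : ℝ) from rfl]
    exact (Real.one_lt_rpow_iff (le_of_lt hL0)).2 (Or.inl ⟨hL1, by norm_num⟩)
  have hs0 : 0 < s := lt_trans one_pos hs1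
  have hsi : s⁻¹ < 1 := by rw [inv_lt_one_iff₀]; right; exact hs1
  have hLi : L⁻¹ < 1 := by rw [inv_lt_one_iff₀]; right; exact hL1
  have hsi0 : (0:ℝ) < s⁻¹ := by positivity
  have hLi0 : (0:ℝ) < L⁻¹ := by positivity
  -- eigenvalues
  set v2 : ℂ := ((lam*s : ℝ) : ℂ) * Complex.exp (-(θ * Complex.I)) with hv2
  set w : ℂ := ((lam⁻¹*s : ℝ) : ℂ) * Complex.exp (θ * Complex.I) with hw
  set w2 : ℂ := ((lam⁻¹*s : ℝ) : ℂ) * Complex.exp (-(θ * Complex.I)) with hw2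
  set c1 : ℂ := ((lam * s⁻¹^2 : ℝ) : ℂ) with hc1
  set c2 : ℂ := ((lam⁻¹ * s⁻¹^2 : ℝ) : ℂ) with hc2
  set M : Multiset ℂ := {v, v2, c1, w, w2, c2} with hM
  have hcp : ((K.map (algebraMap ℝ ℂ))).charpoly = (Multiset.map (fun a => X - C a) M).prod := by
    rw [Matrix.charpoly_map]
    rw [show K.charpoly = (Bm s θ lam).charpoly * (Bm s θ lam⁻¹).charpoly from charK lam s θ]
    rw [Polynomial.map_mul, ← Matrix.charpoly_map, ← Matrix.charpoly_map, aux3, aux3]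
    rw [hM]
    simp only [Multiset.insert_eq_cons, Multiset.map_cons, Multiset.map_singleton,
      Multiset.prod_cons, Multiset.prod_singleton]
    ring
  have hspec : specC K = M := by
    rw [specC, hcp, Polynomial.roots_multiset_prod_X_sub_C]
  -- conjugate
  have hneg : -((θ:ℂ) * Complex.I) = ((-θ : ℝ) : ℂ) * Complex.I := by push_cast; ring
  have hconj : (starRingEnd ℂ) v = v2 := by
    rw [hv2]
    show (starRingEnd ℂ) (((lam*s:ℝ):ℂ) * Complex.exp ((θ:ℝ) * Complex.I)) = _
    rw [_root_.map_mul, Complex.conj_ofReal, ← Complex.exp_conj]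
    congr 2
    simp [_root_.map_mul, Complex.conj_ofReal, Complex.conj_I]
  -- moduli
  have habsv : ‖v‖ = L * s := by
    show ‖((lam*s:ℝ):ℂ) * Complex.exp ((θ:ℝ) * Complex.I)‖ = L * s
    rw [norm_mul, Complex.norm_real, Real.norm_eq_abs, Complex.norm_exp_ofReal_mul_I, mul_one,
      abs_mul, abs_of_pos hs0]
  have habsv2 : ‖v2‖ = L * s := by
    rw [hv2, hneg, norm_mul, Complex.norm_real, Real.norm_eq_abs, Complex.norm_exp_ofReal_mul_I, mul_one,
      abs_mul, abs_of_pos hs0]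
  have habsw : ‖w‖ = L⁻¹ * s := by
    rw [hw, norm_mul, Complex.norm_real, Real.norm_eq_abs, Complex.norm_exp_ofReal_mul_I, mul_one,
      abs_mul, abs_inv, abs_of_pos hs0]
  have habsw2 : ‖w2‖ = L⁻¹ * s := by
    rw [hw2, hneg, norm_mul, Complex.norm_real, Real.norm_eq_abs, Complex.norm_exp_ofReal_mul_I, mul_one,
      abs_mul, abs_inv, abs_of_pos hs0]
  have habsc1 : ‖c1‖ = L * s⁻¹^2 := by
    rw [hc1, Complex.norm_real, Real.norm_eq_abs, abs_mul, abs_pow, abs_inv, abs_of_pos hs0]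
  have habsc2 : ‖c2‖ = L⁻¹ * s⁻¹^2 := by
    rw [hc2, Complex.norm_real, Real.norm_eq_abs, abs_mul, abs_inv, abs_pow, abs_inv, abs_of_pos hs0]
  -- strict inequalities
  have hss : s * s⁻¹ = 1 := mul_inv_cancel₀ (ne_of_gt hs0)
  have hLL : L * L⁻¹ = 1 := mul_inv_cancel₀ (ne_of_gt hL0)
  have i1 : L * s⁻¹^2 < L * s := by
    exact mul_lt_mul_of_pos_left (lt_trans (pow_lt_one₀ hsi0.le hsi (by norm_num)) hs1) hL0
  have i2 : L⁻¹ * s < L * s := by exact mul_lt_mul_of_pos_right (lt_trans hLi hL1) hs0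
  have i3 : L⁻¹ * s⁻¹^2 < L * s := by
    exact lt_trans (mul_lt_mul_of_pos_left (lt_trans (pow_lt_one₀ hsi0.le hsi (by norm_num)) hs1) hLi0) i2
  -- im of v
  have him : v.im = lam * s * Real.sin θ := by
    show (((lam * s : ℝ) : ℂ) * Complex.exp ((θ:ℝ) * Complex.I)).im = _
    simp [Complex.mul_im, Complex.exp_ofReal_mul_I_im]
  have himne : v.im ≠ 0 := by
    rw [him]; exact mul_ne_zero (mul_ne_zero hlam0 (ne_of_gt hs0)) hθ
  have him2 : v2.im ≠ 0 := by
    rw [← hconj]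
    simp only [Complex.conj_im]
    simpa using himne
  -- real roots helper
  have hmonic : ((K.map (algebraMap ℝ ℂ))).charpoly ≠ 0 :=
    ((K.map (algebraMap ℝ ℂ)).charpoly_monic).ne_zero
  have hreal : ∀ x : ℝ, (K.charpoly).IsRoot x → |x| ≠ L * s := by
    intro x hx hxabs
    have hx' : ((K.map (algebraMap ℝ ℂ))).charpoly.eval (x : ℂ) = 0 := by
      rw [Matrix.charpoly_map, Polynomial.eval_map]
      have : (algebraMap ℝ ℂ) x = (x : ℂ) := rfl
      rw [← this, Polynomial.eval₂_hom]
      rw [Polynomial.IsRoot] at hx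
      rw [hx]; simp
    have hmem : (x : ℂ) ∈ specC K := by
      rw [specC]
      exact Polynomial.mem_roots'.2 ⟨hmonic, hx'⟩
    rw [hspec, hM] at hmem
    simp only [Multiset.insert_eq_cons, Multiset.mem_cons, Multiset.mem_singleton] at hmem
    have habsx : ‖(x:ℂ)‖ = L * s := by rw [Complex.norm_real, Real.norm_eq_abs, hxabs]
    rcases hmem with h' | h' | h' | h' | h' | h'
    · exact himne (by rw [← h']; simp)
    · exact him2 (by rw [← h']; simp)
    · rw [h', habsc1] at habsx; linarith
    · rw [h', habsw] at habsx; linarith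
    · rw [h', habsw2] at habsx; linarith
    · rw [h', habsc2] at habsx; linarith
  refine ⟨?_, ?_, ?_, ?_, himne, ?_, ?_⟩
  · rw [hspec, hM]; simp
  · rw [hconj, hspec, hM]; simp
  · intro z hz
    rw [hspec, hM] at hz
    simp only [Multiset.insert_eq_cons, Multiset.mem_cons, Multiset.mem_singleton] at hz
    rw [habsv]
    rcases hz with h' | h' | h' | h' | h' | h' <;> rw [h'] <;>
      first
        | (rw [habsv2])
        | (rw [habsc1]; linarith)
        | (rw [habsw]; linarith)
        | (rw [habsw2]; linarith)
        | (rw [habsc2]; linarith)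
        | skip
    · exact le_of_eq habsv
  · intro z hz hzabs
    rw [hspec, hM] at hz
    rw [habsv] at hzabs
    simp only [Multiset.insert_eq_cons, Multiset.mem_cons, Multiset.mem_singleton] at hz
    rcases hz with h' | h' | h' | h' | h' | h'
    · exact Or.inl h'
    · exact Or.inr (by rw [h', hconj])
    · rw [h', habsc1] at hzabs; linarith
    · rw [h', habsw] at hzabs; linarith
    · rw [h', habsw2] at hzabs; linarith
    · rw [h', habsc2] at hzabs; linarith
  · intro hroot
    exact hreal _ hroot (by rw [habsv, abs_of_pos (by positivity)])
  · intro hroot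
    exact hreal _ hroot (by rw [abs_neg, habsv, abs_of_pos (by positivity)])
end

section
/- Let x, y, λ, μ be real numbers with x² > |λ| > 1, |μ| > y² and y > 0, x > 0, and let θ be real with sin θ ≠ 0. Let A = diag(λ, 1/λ) ∈ SL(2,ℝ) and consider the 4×4 block matrix ψ = diag(x⁻¹ A, x R_θ). Then the eigenvalues of ψ of maximal modulus are x e^{iθ} and x e^{-iθ}, which are non-real; hence ψ is not semiproximal. -/
open Matrix Polynomial

/-!
`ψ` is block diagonal, so its eigenvalues are those of `x⁻¹ A`, namely `λ/x` and `1/(λx)`, and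
those of `x R_θ`, namely `x e^{±iθ}`. The first two have modulus `< x` because `1 < |λ| < x²`,
the last two have modulus `x` and are non-real because `sin θ ≠ 0`; so `±x` are not eigenvalues.
-/

section Spectrum

variable {m n : Type*} [Fintype m] [DecidableEq m] [Fintype n] [DecidableEq n]

lemma specC_fromBlocks (A : Matrix m m ℝ) (B : Matrix n n ℝ) :
    specC (fromBlocks A 0 0 B) = specC A + specC B := by
  rw [specC, specC, specC, fromBlocks_map, Matrix.map_zero _ (map_zero _),
    Matrix.map_zero _ (map_zero _), charpoly_fromBlocks_zero₁₂, roots_mul]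
  exact mul_ne_zero (charpoly_monic _).ne_zero (charpoly_monic _).ne_zero

lemma specC_diagonal (d : n → ℝ) :
    specC (diagonal d) = Finset.univ.val.map fun i => (d i : ℂ) := by
  rw [specC, diagonal_map (map_zero _), charpoly_diagonal, Finset.prod_eq_multiset_prod]
  simpa [Multiset.map_map] using
    roots_multiset_prod_X_sub_C (Finset.univ.val.map fun i => (d i : ℂ))

lemma not_isRoot_charpoly_of_forall_im_ne_zero {A : Matrix n n ℝ} {r : ℝ}
    (h : ∀ z ∈ specC A, ‖z‖ = |r| → z.im ≠ 0) : ¬ A.charpoly.IsRoot r := by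
  intro hr
  have hmem : (r : ℂ) ∈ specC A := by
    rw [specC, charpoly_map, mem_roots ((charpoly_monic A).map _).ne_zero]
    exact hr.map
  exact h _ hmem (by simp) (Complex.ofReal_im r)

end Spectrum

lemma specC_complexMulMatrix (z : ℂ) :
    specC !![z.re, -z.im; z.im, z.re] = {z, (starRingEnd ℂ) z} := by
  have hcharpoly : (!![z.re, -z.im; z.im, z.re].map (algebraMap ℝ ℂ)).charpoly =
      (X - C z) * (X - C ((starRingEnd ℂ) z)) := by
    rw [charpoly_fin_two, trace_fin_two, det_fin_two]
    have hsum : (z.re + z.re : ℂ) = z + (starRingEnd ℂ) z := by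
      rw [Complex.add_conj]; push_cast; ring
    have hprod : (z.re * z.re - (-z.im : ℝ) * z.im : ℂ) = z * (starRingEnd ℂ) z := by
      rw [Complex.mul_conj, Complex.normSq_apply]; push_cast; ring
    simp only [map_apply, of_apply, cons_val', cons_val_zero, cons_val_one, empty_val',
      cons_val_fin_one, Complex.coe_algebraMap]
    rw [hsum, hprod, C_add, C_mul]
    ring
  rw [specC, hcharpoly, roots_mul (mul_ne_zero (X_sub_C_ne_zero _) (X_sub_C_ne_zero _)),
    roots_X_sub_C, roots_X_sub_C]
  rfl

lemma specC_smul_rotation (r θ : ℝ) :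
    specC (r • !![Real.cos θ, -Real.sin θ; Real.sin θ, Real.cos θ]) =
      {r * Complex.exp (θ * Complex.I), (starRingEnd ℂ) (r * Complex.exp (θ * Complex.I))} := by
  rw [← specC_complexMulMatrix]
  congr 1
  ext i j
  fin_cases i <;> fin_cases j <;>
    simp [Complex.exp_ofReal_mul_I_re, Complex.exp_ofReal_mul_I_im]

lemma specC_fromBlocks_smul_diagonal_smul_rotation (c a b r θ : ℝ) :
    specC (fromBlocks (c • diagonal ![a, b]) 0 0
        (r • !![Real.cos θ, -Real.sin θ; Real.sin θ, Real.cos θ])) =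
      {((c * a : ℝ) : ℂ), ((c * b : ℝ) : ℂ), r * Complex.exp (θ * Complex.I),
        (starRingEnd ℂ) (r * Complex.exp (θ * Complex.I))} := by
  rw [specC_fromBlocks, ← diagonal_smul, specC_diagonal, specC_smul_rotation]
  simp only [Fin.univ_val_map, List.ofFn_succ, List.ofFn_zero, Pi.smul_apply, smul_eq_mul,
    cons_val_zero, cons_val_one, Fin.succ_zero_eq_one]
  rfl

lemma abs_inv_mul_lt_of_abs_lt_sq {x l : ℝ} (hx : 0 < x) (h : |l| < x ^ 2) :
    |x⁻¹ * l| < x := by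
  rw [abs_mul, abs_inv, abs_of_pos hx, inv_mul_lt_iff₀ hx]
  simpa [sq] using h

theorem stmt_18_general (x lam θ : ℝ) (h1 : x ^ 2 > |lam|) (h2 : |lam| > 1)
    (hx : 0 < x) (hθ : Real.sin θ ≠ 0) :
    let A : Matrix (Fin 2) (Fin 2) ℝ := Matrix.diagonal ![lam, lam⁻¹]
    let Rθ : Matrix (Fin 2) (Fin 2) ℝ :=
      !![Real.cos θ, -Real.sin θ; Real.sin θ, Real.cos θ]
    let ψ : Matrix (Fin 2 ⊕ Fin 2) (Fin 2 ⊕ Fin 2) ℝ :=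
      Matrix.fromBlocks (x⁻¹ • A) 0 0 (x • Rθ)
    let v : ℂ := (x : ℝ) * Complex.exp (θ * Complex.I)
    v ∈ specC ψ ∧ (starRingEnd ℂ) v ∈ specC ψ ∧
    (∀ z ∈ specC ψ, ‖z‖ ≤ x) ∧
    (∀ z ∈ specC ψ, ‖z‖ = x → z = v ∨ z = (starRingEnd ℂ) v) ∧
    v.im ≠ 0 ∧
    ¬ (ψ.charpoly).IsRoot x ∧ ¬ (ψ.charpoly).IsRoot (-x) := by
  intro A Rθ ψ v
  have hspec : specC ψ = {↑(x⁻¹ * lam), ↑(x⁻¹ * lam⁻¹), v, (starRingEnd ℂ) v} :=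
    specC_fromBlocks_smul_diagonal_smul_rotation _ _ _ _ _
  have hmem : ∀ z, z ∈ specC ψ ↔
      z = ↑(x⁻¹ * lam) ∨ z = ↑(x⁻¹ * lam⁻¹) ∨ z = v ∨ z = (starRingEnd ℂ) v := fun z => by
    simp only [hspec, Multiset.insert_eq_cons, Multiset.mem_cons, Multiset.mem_singleton]
  have hnorm_v : ‖v‖ = x := by simp [v, abs_of_pos hx]
  have hv_nonreal : v.im ≠ 0 := by
    simpa [v, Complex.exp_ofReal_mul_I_im] using mul_ne_zero hx.ne' hθ
  have hsmall₁ : |x⁻¹ * lam| < x := abs_inv_mul_lt_of_abs_lt_sq hx h1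
  have hsmall₂ : |x⁻¹ * lam⁻¹| < x :=
    abs_inv_mul_lt_of_abs_lt_sq hx (by rw [abs_inv]; linarith [inv_lt_one_of_one_lt₀ h2])
  have hdichotomy : ∀ z ∈ specC ψ, z = v ∨ z = (starRingEnd ℂ) v ∨ ‖z‖ < x := by
    intro z hz
    rcases (hmem z).1 hz with rfl | rfl | h | h
    · exact .inr <| .inr <| by rwa [Complex.norm_real, Real.norm_eq_abs]
    · exact .inr <| .inr <| by rwa [Complex.norm_real, Real.norm_eq_abs]
    · exact .inl h
    · exact .inr <| .inl h
  have hmax : ∀ z ∈ specC ψ, ‖z‖ = x → z = v ∨ z = (starRingEnd ℂ) v := fun z hz hzx =>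
    (hdichotomy z hz).imp_right (Or.resolve_right · hzx.not_lt)
  have hno_real_root : ∀ r : ℝ, |r| = x → ¬ ψ.charpoly.IsRoot r := fun r hr =>
    not_isRoot_charpoly_of_forall_im_ne_zero fun z hz hzr => by
      rcases hmax z hz (hr ▸ hzr) with rfl | rfl <;> simpa using hv_nonreal
  refine ⟨(hmem v).2 (by simp), (hmem _).2 (by simp), fun z hz => ?_, hmax, hv_nonreal,
    hno_real_root x (abs_of_pos hx), hno_real_root (-x) (by simp [abs_of_pos hx])⟩
  rcases hdichotomy z hz with rfl | rfl | h
  · exact hnorm_v.le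
  · exact (Complex.norm_conj v).trans_le hnorm_v.le
  · exact h.le

/-- with `x² > |λ| > 1`, `|μ| > y²`, `x, y > 0`, `sin θ ≠ 0`, the eigenvalues of
maximal modulus of `ψ = diag(x⁻¹·diag(λ,1/λ), x·R_θ)` are exactly the non-real numbers
`xe^{±iθ}`; hence `ψ` is not semiproximal. -/
theorem stmt_18 (x y lam mu θ : ℝ) (h1 : x ^ 2 > |lam|) (h2 : |lam| > 1) (h3 : |mu| > y ^ 2)
    (hy : 0 < y) (hx : 0 < x) (hθ : Real.sin θ ≠ 0) :
    let A : Matrix (Fin 2) (Fin 2) ℝ := Matrix.diagonal ![lam, lam⁻¹]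
    let Rθ : Matrix (Fin 2) (Fin 2) ℝ :=
      !![Real.cos θ, -Real.sin θ; Real.sin θ, Real.cos θ]
    let ψ : Matrix (Fin 2 ⊕ Fin 2) (Fin 2 ⊕ Fin 2) ℝ :=
      Matrix.fromBlocks (x⁻¹ • A) 0 0 (x • Rθ)
    let v : ℂ := (x : ℝ) * Complex.exp (θ * Complex.I)
    v ∈ specC ψ ∧ (starRingEnd ℂ) v ∈ specC ψ ∧
    (∀ z ∈ specC ψ, ‖z‖ ≤ x) ∧
    (∀ z ∈ specC ψ, ‖z‖ = x → z = v ∨ z = (starRingEnd ℂ) v) ∧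
    v.im ≠ 0 ∧
    ¬ (ψ.charpoly).IsRoot x ∧ ¬ (ψ.charpoly).IsRoot (-x) :=
  stmt_18_general x lam θ h1 h2 hx hθ
end
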